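/- arXiv:1901.09698 — 3 statements merged into one kernel-verified Lean document; each statement's English description precedes it below -/
import Mathlib

section
/- Vanishing of the lower-tail sum: Let 0 < Γ(0) < Γ(1) < 1, let 0 < μ(1) < 1 with μ(0) = 1 − μ(1), let ρ > 0, let L : ℕ → ℕ be a ρ-admissible scaling, and let ν′ ∈ (0, μ(1)) satisfy 1 + ρ ln G(ν′, μ(1)) < 0. Then Σ_{ℓ=0}^{⌊ν′ L_n⌋} n C(L_n,ℓ) μ(1)^ℓ μ(0)^{L_n−ℓ} (1 − Γ(1)^ℓ Γ(0)^{L_n−ℓ})^{n−1} → 0 as n → ∞. -/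
open MeasureTheory Filter

/-- Bernoulli measure on `Bool` with parameter `p` = probability of `true`. -/
noncomputable def bern (p : ℝ) : Measure Bool :=
  (Real.toNNReal p) • Measure.dirac true + (Real.toNNReal (1 - p)) • Measure.dirac false

/-- Uniform distribution on `[0,1]`. -/
noncomputable def unif01 : Measure ℝ := MeasureTheory.volume.restrict (Set.Icc (0:ℝ) 1)

/-- The probability space of the homogeneous binary MAG model `M(n;L)`:
i.i.d. Bernoulli attribute bits and, independently, i.i.d. Uniform(0,1) variables. -/
noncomputable def magMeasure (n L : ℕ) (p : ℝ) :
    Measure ((Fin n → Fin L → Bool) × (Fin n × Fin n → ℝ)) :=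
  (Measure.pi fun _ : Fin n => Measure.pi fun _ : Fin L => bern p).prod
    (Measure.pi fun _ : Fin n × Fin n => unif01)

/-- `Q_L(a,b) = ∏_{ℓ} q(a_ℓ, b_ℓ)`. -/
def QL {L : ℕ} (q : Bool → Bool → ℝ) (a b : Fin L → Bool) : ℝ :=
  ∏ ℓ : Fin L, q (a ℓ) (b ℓ)

/-- Distinct nodes `u, v` are adjacent iff `U(u,v) ≤ Q_L(A(u),A(v))`, where the uniform
variable attached to the unordered pair `{u,v}` is the one indexed by `(min u v, max u v)`. -/
def Adj {n L : ℕ} (q : Bool → Bool → ℝ)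
    (ω : (Fin n → Fin L → Bool) × (Fin n × Fin n → ℝ)) (u v : Fin n) : Prop :=
  u ≠ v ∧ ω.2 (min u v, max u v) ≤ QL q (ω.1 u) (ω.1 v)

/-- Node `u` is isolated if it is adjacent to no other node. -/
def Isolated {n L : ℕ} (q : Bool → Bool → ℝ)
    (ω : (Fin n → Fin L → Bool) × (Fin n × Fin n → ℝ)) (u : Fin n) : Prop :=
  ∀ v, ¬ Adj q ω u v

/-- `S_L(u)`: the number of attributes exhibited by node `u`. -/
def Scount {n L : ℕ} (ω : (Fin n → Fin L → Bool) × (Fin n × Fin n → ℝ)) (u : Fin n) : ℕ :=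
  (Finset.univ.filter fun ℓ : Fin L => ω.1 u ℓ = true).card

open scoped Classical in
/-- `I_n(L)`: the number of isolated nodes. -/
noncomputable def numIsolated {n L : ℕ} (q : Bool → Bool → ℝ)
    (ω : (Fin n → Fin L → Bool) × (Fin n × Fin n → ℝ)) : ℕ :=
  (Finset.univ.filter fun u : Fin n => Isolated q ω u).card

open scoped Classical in
/-- `I_n^{(k)}(L)`: the number of isolated nodes `u` with `S_L(u) = k`. -/
noncomputable def numIsolatedWith {n L : ℕ} (q : Bool → Bool → ℝ) (k : ℕ)
    (ω : (Fin n → Fin L → Bool) × (Fin n × Fin n → ℝ)) : ℕ :=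
  (Finset.univ.filter fun u : Fin n => Isolated q ω u ∧ Scount ω u = k).card

open scoped Classical in
/-- `ξ^{(k)}(u)`: the indicator that node `u` is isolated and `S_L(u) = k`. -/
noncomputable def xiInd {n L : ℕ} (q : Bool → Bool → ℝ) (k : ℕ)
    (ω : (Fin n → Fin L → Bool) × (Fin n × Fin n → ℝ)) (u : Fin n) : ℝ :=
  if Isolated q ω u ∧ Scount ω u = k then 1 else 0

/-- `Γ(a) = μ(0) q(a,0) + μ(1) q(a,1)`, with `μ(1) = μ1`, `μ(0) = 1 - μ1`. -/
def Gam (μ1 : ℝ) (q : Bool → Bool → ℝ) (a : Bool) : ℝ :=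
  (1 - μ1) * q a false + μ1 * q a true

/-- A scaling `L : ℕ → ℕ` is `ρ`-admissible if `L_n ~ ρ ln n` as `n → ∞`. -/
def Admissible (ρ : ℝ) (L : ℕ → ℕ) : Prop :=
  Asymptotics.IsEquivalent Filter.atTop (fun n => (L n : ℝ)) (fun n => ρ * Real.log n)

/-- `G(ν,μ) = (μ/ν)^ν ((1-μ)/(1-ν))^{1-ν}` (real powers; the conventions at `ν = 0,1`
agree with the continuous extension). -/
noncomputable def Gfun (ν μ : ℝ) : ℝ :=
  (μ / ν) ^ ν * ((1 - μ) / (1 - ν)) ^ (1 - ν)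

/-- `Q*_L(a) = E[Q_L(a,A)]`, `A` a vector of `L` i.i.d. Bernoulli(μ1) bits. -/
noncomputable def Qstar {L : ℕ} (μ1 : ℝ) (q : Bool → Bool → ℝ) (a : Fin L → Bool) : ℝ :=
  ∫ b, QL q a b ∂(Measure.pi fun _ : Fin L => bern μ1)

/-- `Q**_L(a,b) = E[Q_L(a,A) Q_L(b,A)]`. -/
noncomputable def Qstarstar {L : ℕ} (μ1 : ℝ) (q : Bool → Bool → ℝ) (a b : Fin L → Bool) : ℝ :=
  ∫ c, QL q a c * QL q b c ∂(Measure.pi fun _ : Fin L => bern μ1)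

/-- `Q̃_L(a,b) = Q*_L(a) + Q*_L(b) − Q**_L(a,b)`. -/
noncomputable def Qtilde {L : ℕ} (μ1 : ℝ) (q : Bool → Bool → ℝ) (a b : Fin L → Bool) : ℝ :=
  Qstar μ1 q a + Qstar μ1 q b - Qstarstar μ1 q a b

/-- Chernoff bound for the lower binomial tail. -/
lemma chernoff_aux (μ ν' : ℝ) (hμ0 : 0 < μ) (hμlt1 : μ < 1) (hν0 : 0 < ν') (hνμ : ν' < μ)
    (L m : ℕ) (hm : (m : ℝ) ≤ ν' * L) :
    ∑ ℓ ∈ Finset.range (m+1), ((L.choose ℓ : ℝ)) * μ ^ ℓ * (1-μ) ^ (L - ℓ)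
      ≤ (Gfun ν' μ) ^ L := by
  have hν1 : ν' < 1 := hνμ.trans hμlt1
  set A := μ / ν' with hA_def
  set B := (1-μ)/(1-ν') with hB_def
  have hA : 0 < A := div_pos hμ0 hν0
  have hB : 0 < B := div_pos (by linarith) (by linarith)
  have hBA : B < A := by
    rw [hA_def, hB_def, div_lt_div_iff₀ (by linarith) hν0]
    nlinarith
  set t := B / A with ht_def
  have ht0 : 0 < t := div_pos hB hA
  have ht1 : t < 1 := (div_lt_one hA).2 hBA
  have hmL : m ≤ L := by
    have h1 : (m:ℝ) ≤ L := le_trans hm (by nlinarith [(Nat.cast_nonneg L : (0:ℝ) ≤ (L:ℝ))])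
    exact_mod_cast h1
  have step1 : ∑ ℓ ∈ Finset.range (m+1), ((L.choose ℓ : ℝ)) * μ ^ ℓ * (1-μ) ^ (L - ℓ)
      ≤ (A/B)^m * B ^ L := by
    have key : ∀ ℓ ∈ Finset.range (m+1),
        ((L.choose ℓ : ℝ)) * μ ^ ℓ * (1-μ) ^ (L - ℓ)
          ≤ (A/B)^m * (((L.choose ℓ : ℝ)) * (t*μ) ^ ℓ * (1-μ) ^ (L - ℓ)) := by
      intro ℓ hℓ
      have hℓm : ℓ ≤ m := Nat.lt_succ_iff.1 (Finset.mem_range.1 hℓ)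
      have h1 : μ ^ ℓ ≤ (A/B)^m * (t*μ)^ℓ := by
        have hinv : (A/B) = t⁻¹ := by rw [ht_def, inv_div]
        rw [mul_pow, hinv]
        have htm : t ^ m ≤ t ^ ℓ := pow_le_pow_of_le_one ht0.le ht1.le hℓm
        calc μ ^ ℓ = (t⁻¹^m * t^m) * μ^ℓ := by
              rw [← mul_pow, inv_mul_cancel₀ ht0.ne', one_pow, one_mul]
          _ ≤ (t⁻¹^m * t^ℓ) * μ^ℓ := by
              have h2 : (0:ℝ) < t⁻¹ ^ m := pow_pos (inv_pos.2 ht0) m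
              have h3 : (0:ℝ) < μ ^ ℓ := pow_pos hμ0 ℓ
              have h4 : t⁻¹^m * t^m ≤ t⁻¹^m * t^ℓ := mul_le_mul_of_nonneg_left htm h2.le
              exact mul_le_mul_of_nonneg_right h4 h3.le
          _ = t⁻¹ ^ m * (t^ℓ * μ^ℓ) := by ring
      calc (L.choose ℓ : ℝ) * μ ^ ℓ * (1-μ)^(L-ℓ)
          ≤ (L.choose ℓ : ℝ) * ((A/B)^m * (t*μ)^ℓ) * (1-μ)^(L-ℓ) := by
            apply mul_le_mul_of_nonneg_right _ (pow_nonneg (by linarith) _)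
            exact mul_le_mul_of_nonneg_left h1 (Nat.cast_nonneg _)
        _ = (A/B)^m * ((L.choose ℓ : ℝ) * (t*μ)^ℓ * (1-μ)^(L-ℓ)) := by ring
    calc ∑ ℓ ∈ Finset.range (m+1), ((L.choose ℓ : ℝ)) * μ ^ ℓ * (1-μ) ^ (L - ℓ)
        ≤ ∑ ℓ ∈ Finset.range (m+1),
            (A/B)^m * (((L.choose ℓ : ℝ)) * (t*μ) ^ ℓ * (1-μ) ^ (L - ℓ)) :=
          Finset.sum_le_sum key
      _ = (A/B)^m * ∑ ℓ ∈ Finset.range (m+1),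
            ((L.choose ℓ : ℝ)) * (t*μ) ^ ℓ * (1-μ) ^ (L - ℓ) := by
          rw [Finset.mul_sum]
      _ ≤ (A/B)^m * ∑ ℓ ∈ Finset.range (L+1),
            ((L.choose ℓ : ℝ)) * (t*μ) ^ ℓ * (1-μ) ^ (L - ℓ) := by
          apply mul_le_mul_of_nonneg_left _ (pow_nonneg (div_pos hA hB).le _)
          apply Finset.sum_le_sum_of_subset_of_nonneg
          · exact Finset.range_subset_range.2 (by omega)
          · intro i _ _
            have : (0:ℝ) ≤ t*μ := by positivity
            have h1μ : (0:ℝ) ≤ 1 - μ := by linarith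
            positivity
      _ = (A/B)^m * (t*μ + (1-μ))^L := by
          rw [add_pow]
          congr 1
          exact (Finset.sum_congr rfl fun i hi => by ring)
      _ = (A/B)^m * B^L := by
          have hμne : μ ≠ 0 := hμ0.ne'
          have hν'ne : ν' ≠ 0 := hν0.ne'
          have h1ν : (1:ℝ) - ν' ≠ 0 := by linarith
          congr 2
          rw [ht_def, hA_def, hB_def]
          field_simp
          ring
  have hAB1 : (1:ℝ) ≤ A/B := le_of_lt ((one_lt_div hB).2 hBA)
  have step2 : (A/B)^m * B^L ≤ Gfun ν' μ ^ L := by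
    have h1 : (A/B)^m ≤ (A/B) ^ (ν' * L) := by
      rw [← Real.rpow_natCast (A/B) m]
      exact Real.rpow_le_rpow_of_exponent_le hAB1 hm
    have h2 : (A/B) ^ (ν' * L) * B^L = Gfun ν' μ ^ L := by
      have e1 : Gfun ν' μ = A ^ ν' * B ^ (1-ν') := by rw [Gfun, ← hA_def, ← hB_def]
      rw [e1, ← Real.rpow_natCast (A ^ ν' * B ^ (1-ν')) L, ← Real.rpow_natCast B L,
          Real.mul_rpow (Real.rpow_nonneg hA.le _) (Real.rpow_nonneg hB.le _),
          ← Real.rpow_mul hA.le, ← Real.rpow_mul hB.le,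
          Real.div_rpow hA.le hB.le]
      rw [div_mul_eq_mul_div, div_eq_iff (Real.rpow_pos_of_pos hB _).ne', mul_assoc,
          ← Real.rpow_add hB]
      rw [show (1-ν')*(L:ℝ) + ν'*(L:ℝ) = (L:ℝ) by ring]
    calc (A/B)^m * B^L ≤ (A/B)^(ν' * L) * B^L :=
          mul_le_mul_of_nonneg_right h1 (pow_nonneg hB.le _)
      _ = Gfun ν' μ ^ L := h2
  exact step1.trans step2

theorem lower_tail_sum_vanishes
    (Γ0 Γ1 : ℝ) (hΓ0 : 0 < Γ0) (hΓ01 : Γ0 < Γ1) (hΓ1 : Γ1 < 1)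
    (μ1 : ℝ) (hμ1 : μ1 ∈ Set.Ioo (0:ℝ) 1)
    (ρ : ℝ) (hρ : 0 < ρ) (L : ℕ → ℕ) (hL : Admissible ρ L)
    (ν' : ℝ) (hν' : ν' ∈ Set.Ioo 0 μ1)
    (hG : 1 + ρ * Real.log (Gfun ν' μ1) < 0) :
    Tendsto
      (fun n => ∑ ℓ ∈ Finset.range (⌊ν' * (L n : ℝ)⌋₊ + 1),
        (n : ℝ) * ((L n).choose ℓ : ℝ) * μ1 ^ ℓ * (1 - μ1) ^ (L n - ℓ) *
          (1 - Γ1 ^ ℓ * Γ0 ^ (L n - ℓ)) ^ (n - 1))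
      atTop (nhds 0) := by
  obtain ⟨hμ0, hμlt1⟩ := hμ1
  obtain ⟨hν0, hνμ⟩ := hν'
  have hν1 : ν' < 1 := hνμ.trans hμlt1
  have hG0 : 0 < Gfun ν' μ1 := by
    rw [Gfun]
    have hA : (0:ℝ) < μ1 / ν' := div_pos hμ0 hν0
    have hB : (0:ℝ) < (1-μ1)/(1-ν') := div_pos (by linarith) (by linarith)
    exact mul_pos (Real.rpow_pos_of_pos hA _) (Real.rpow_pos_of_pos hB _)
  set c := Real.log (Gfun ν' μ1) with hc_def
  -- the dominating sequence tends to zero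
  have hmain : Tendsto (fun n : ℕ => (n:ℝ) * Gfun ν' μ1 ^ L n) atTop (nhds 0) := by
    have hg_ne : ∀ᶠ n : ℕ in atTop, ρ * Real.log n ≠ 0 := by
      filter_upwards [eventually_ge_atTop 2] with n hn
      have hlog : (0:ℝ) < Real.log n :=
        Real.log_pos (by exact_mod_cast Nat.one_lt_cast.2 (by omega))
      positivity
    have hr : Tendsto (fun n : ℕ => (L n : ℝ)/(ρ * Real.log n)) atTop (nhds 1) :=
      (Asymptotics.isEquivalent_iff_tendsto_one hg_ne).1 hL
    have hlim : Tendsto (fun n : ℕ => 1 + ((L n : ℝ)/(ρ * Real.log n)) * (ρ * c))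
        atTop (nhds (1 + 1 * (ρ * c))) :=
      (tendsto_const_nhds.add (hr.mul tendsto_const_nhds))
    have hneg : 1 + 1 * (ρ * c) < 0 := by linarith
    have hlogn : Tendsto (fun n : ℕ => Real.log n) atTop atTop :=
      Real.tendsto_log_atTop.comp tendsto_natCast_atTop_atTop
    have h2 : Tendsto (fun n : ℕ =>
        Real.log n * (1 + ((L n : ℝ)/(ρ * Real.log n)) * (ρ * c))) atTop atBot :=
      Tendsto.atTop_mul_neg hneg hlogn hlim
    have h1 : Tendsto (fun n : ℕ => Real.log n + (L n : ℝ) * c) atTop atBot := by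
      apply h2.congr'
      filter_upwards [eventually_ge_atTop 2] with n hn
      have hlog : (0:ℝ) < Real.log n :=
        Real.log_pos (by exact_mod_cast Nat.one_lt_cast.2 (by omega))
      have hρlog : ρ * Real.log n ≠ 0 := by positivity
      field_simp
    have h3 := Real.tendsto_exp_atBot.comp h1
    apply h3.congr'
    filter_upwards [eventually_ge_atTop 1] with n hn
    have hn0 : (0:ℝ) < n := by exact_mod_cast Nat.pos_of_ne_zero (by omega)
    simp only [Function.comp]
    rw [Real.exp_add, Real.exp_log hn0, Real.exp_nat_mul, hc_def, Real.exp_log hG0]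
  -- squeeze
  apply squeeze_zero (g := fun n : ℕ => (n:ℝ) * Gfun ν' μ1 ^ L n) _ _ hmain
  · intro n
    apply Finset.sum_nonneg
    intro ℓ _
    have hΓprod : (0:ℝ) ≤ 1 - Γ1 ^ ℓ * Γ0 ^ (L n - ℓ) := by
      have h1 : Γ1 ^ ℓ ≤ 1 := pow_le_one₀ (by linarith) (by linarith)
      have h2 : Γ0 ^ (L n - ℓ) ≤ 1 := pow_le_one₀ hΓ0.le (by linarith)
      nlinarith [pow_nonneg hΓ0.le (L n - ℓ), pow_nonneg (le_of_lt (hΓ0.trans hΓ01)) ℓ]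
    have h1μ : (0:ℝ) ≤ 1 - μ1 := by linarith
    positivity
  · intro n
    have hm : (⌊ν' * (L n : ℝ)⌋₊ : ℝ) ≤ ν' * L n := Nat.floor_le (by positivity)
    calc ∑ ℓ ∈ Finset.range (⌊ν' * (L n : ℝ)⌋₊ + 1),
          (n : ℝ) * ((L n).choose ℓ : ℝ) * μ1 ^ ℓ * (1 - μ1) ^ (L n - ℓ) *
            (1 - Γ1 ^ ℓ * Γ0 ^ (L n - ℓ)) ^ (n - 1)
        ≤ ∑ ℓ ∈ Finset.range (⌊ν' * (L n : ℝ)⌋₊ + 1),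
          (n : ℝ) * (((L n).choose ℓ : ℝ) * μ1 ^ ℓ * (1 - μ1) ^ (L n - ℓ)) := by
          apply Finset.sum_le_sum
          intro ℓ _
          have hΓ1p : (0:ℝ) < Γ1 := hΓ0.trans hΓ01
          have hfac : (1 - Γ1 ^ ℓ * Γ0 ^ (L n - ℓ)) ^ (n - 1) ≤ 1 := by
            apply pow_le_one₀
            · have h1 : Γ1 ^ ℓ ≤ 1 := pow_le_one₀ hΓ1p.le (by linarith)
              have h2 : Γ0 ^ (L n - ℓ) ≤ 1 := pow_le_one₀ hΓ0.le (by linarith)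
              nlinarith [pow_nonneg hΓ0.le (L n - ℓ), pow_nonneg hΓ1p.le ℓ]
            · nlinarith [pow_pos hΓ1p ℓ, pow_pos hΓ0 (L n - ℓ)]
          have hterm : (0:ℝ) ≤ (n : ℝ) * ((L n).choose ℓ : ℝ) * μ1 ^ ℓ *
              (1 - μ1) ^ (L n - ℓ) := by
            have h1μ : (0:ℝ) ≤ 1 - μ1 := by linarith
            positivity
          calc (n : ℝ) * ((L n).choose ℓ : ℝ) * μ1 ^ ℓ * (1 - μ1) ^ (L n - ℓ) *
                (1 - Γ1 ^ ℓ * Γ0 ^ (L n - ℓ)) ^ (n - 1)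
              ≤ (n : ℝ) * ((L n).choose ℓ : ℝ) * μ1 ^ ℓ * (1 - μ1) ^ (L n - ℓ) * 1 :=
                mul_le_mul_of_nonneg_left hfac hterm
            _ = (n : ℝ) * (((L n).choose ℓ : ℝ) * μ1 ^ ℓ * (1 - μ1) ^ (L n - ℓ)) := by ring
      _ = (n : ℝ) * ∑ ℓ ∈ Finset.range (⌊ν' * (L n : ℝ)⌋₊ + 1),
            ((L n).choose ℓ : ℝ) * μ1 ^ ℓ * (1 - μ1) ^ (L n - ℓ) := by
          rw [Finset.mul_sum]
      _ ≤ (n : ℝ) * Gfun ν' μ1 ^ L n := by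
          apply mul_le_mul_of_nonneg_left _ (Nat.cast_nonneg n)
          exact chernoff_aux μ1 ν' hμ0 hμlt1 hν0 hνμ (L n) _ hm
end

section
/- Vanishing of the upper-tail sum: Let 0 < Γ(0) < Γ(1) < 1, let 0 < μ(1) < 1 with μ(0) = 1 − μ(1), let ρ > 0, let L : ℕ → ℕ be a ρ-admissible scaling, and let ν′ ∈ (0, 1) satisfy 1 + ρ ln(Γ(1)^{ν′} Γ(0)^{1−ν′}) > 0. Then Σ_{ℓ=⌊ν′ L_n⌋+1}^{L_n} n C(L_n,ℓ) μ(1)^ℓ μ(0)^{L_n−ℓ} (1 − Γ(1)^ℓ Γ(0)^{L_n−ℓ})^{n−1} → 0 as n → ∞. -/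
open MeasureTheory Filter

/-! For `ℓ > ν' L` the isolation probability `(1 - Γ1^ℓ Γ0^(L-ℓ))^(n-1)` is at most
`(1 - c^L)^(n-1)` with `c = Γ1^ν' Γ0^(1-ν')`, and the binomial weights sum to at most one, so the
tail is at most `n (1 - c^L)^(n-1) ≤ n exp(-(n-1) c^L)`. Since `L_n ~ ρ ln n`, `c^{L_n}` is
eventually at least `n^{-β}` for any `β > -ρ ln c`; the hypothesis `1 + ρ ln c > 0` lets us take
`β < 1`, and then `n exp(-(n-1) n^{-β}) → 0`. -/

open Real Topology

lemma tendsto_mul_exp_neg_mul_rpow_atTop_nhds_zero {a γ : ℝ} (ha : 0 < a) (hγ : 0 < γ) :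
    Tendsto (fun x : ℝ => x * exp (-(a * x ^ γ))) atTop (𝓝 0) := by
  refine ((tendsto_rpow_mul_exp_neg_mul_atTop_nhds_zero γ⁻¹ a ha).comp
    (tendsto_rpow_atTop hγ)).congr' ?_
  filter_upwards [eventually_ge_atTop 0] with x hx
  simp only [Function.comp_apply, neg_mul, ← rpow_mul hx, mul_inv_cancel₀ hγ.ne', rpow_one]

lemma tendsto_natCast_mul_one_sub_pow {β : ℝ} (hβ : β < 1) {x : ℕ → ℝ} (hx1 : ∀ n, x n ≤ 1)
    (hx : ∀ᶠ n : ℕ in atTop, (n : ℝ) ^ (-β) ≤ x n) :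
    Tendsto (fun n : ℕ => (n : ℝ) * (1 - x n) ^ (n - 1)) atTop (𝓝 0) := by
  have hlim := (tendsto_mul_exp_neg_mul_rpow_atTop_nhds_zero (by norm_num : (0 : ℝ) < 1 / 2)
    (sub_pos.2 hβ)).comp tendsto_natCast_atTop_atTop
  refine squeeze_zero' (Eventually.of_forall fun n => ?_) ?_ hlim
  · exact mul_nonneg n.cast_nonneg (pow_nonneg (sub_nonneg.2 (hx1 n)) _)
  filter_upwards [hx, eventually_ge_atTop 2] with n hxn hn
  have hn0 : (0 : ℝ) < n := by positivity
  have hn2 : (2 : ℝ) ≤ n := by exact_mod_cast hn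
  -- `n - 1 ≥ n / 2` and `n · n^{-β} = n^{1-β}`
  have hexp : 1 / 2 * (n : ℝ) ^ (1 - β) ≤ ((n - 1 : ℕ) : ℝ) * x n := by
    rw [Nat.cast_sub (by omega), Nat.cast_one, sub_eq_add_neg (1 : ℝ), rpow_add hn0, rpow_one]
    nlinarith [rpow_nonneg hn0.le (-β)]
  calc (n : ℝ) * (1 - x n) ^ (n - 1) ≤ n * exp (-x n) ^ (n - 1) := by
        gcongr
        · exact sub_nonneg.2 (hx1 n)
        · exact one_sub_le_exp_neg _
    _ = n * exp (-(((n - 1 : ℕ) : ℝ) * x n)) := by rw [← exp_nat_mul, mul_neg]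
    _ ≤ n * exp (-(1 / 2 * (n : ℝ) ^ (1 - β))) := by gcongr

lemma Admissible.tendsto_div_log {ρ : ℝ} {L : ℕ → ℕ} (hL : Admissible ρ L) :
    Tendsto (fun n : ℕ => (L n : ℝ) / log n) atTop (𝓝 ρ) := by
  refine (hL.div (Asymptotics.IsEquivalent.refl (u := fun n : ℕ => log n))).symm.tendsto_nhds
    (tendsto_const_nhds.congr' ?_)
  filter_upwards [eventually_ge_atTop 2] with n hn
  have : log n ≠ 0 := (log_pos (by exact_mod_cast hn)).ne'
  simp [mul_div_assoc, div_self this]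

lemma Admissible.eventually_rpow_neg_le_pow {ρ : ℝ} {L : ℕ → ℕ} (hL : Admissible ρ L) {c β : ℝ}
    (hc : 0 < c) (hβ : -(ρ * log c) < β) :
    ∀ᶠ n : ℕ in atTop, (n : ℝ) ^ (-β) ≤ c ^ L n := by
  have hlim := (hL.tendsto_div_log.mul_const (log c)).eventually
    (lt_mem_nhds (a := -β) (by linarith))
  filter_upwards [hlim, eventually_ge_atTop 2] with n hn hn2
  have hlog : 0 < log n := log_pos (by exact_mod_cast hn2)
  rw [div_mul_eq_mul_div, lt_div_iff₀ hlog] at hn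
  rw [← rpow_natCast, rpow_def_of_pos (by positivity), rpow_def_of_pos hc]
  exact exp_le_exp.2 (by linarith)

lemma rpow_mul_rpow_pow_le_pow_mul_pow {a b ν : ℝ} (ha : 0 < a) (hab : a ≤ b) {ℓ N : ℕ}
    (hνℓ : ν * N ≤ ℓ) (hℓN : ℓ ≤ N) :
    (b ^ ν * a ^ (1 - ν)) ^ N ≤ b ^ ℓ * a ^ (N - ℓ) := by
  have hb : 0 < b := ha.trans_le hab
  rw [← log_le_log_iff (by positivity) (by positivity), log_pow, log_mul (by positivity)
    (by positivity), log_mul (by positivity) (by positivity), log_rpow hb, log_rpow ha, log_pow,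
    log_pow, Nat.cast_sub hℓN]
  nlinarith [log_le_log ha hab]

lemma sum_choose_mul_pow_mul_pow_le_one {p : ℝ} (hp0 : 0 ≤ p) (hp1 : p ≤ 1) (k N : ℕ) :
    ∑ ℓ ∈ Finset.Icc k N, p ^ ℓ * (1 - p) ^ (N - ℓ) * (N.choose ℓ : ℝ) ≤ 1 := by
  have hq : 0 ≤ 1 - p := sub_nonneg.2 hp1
  calc ∑ ℓ ∈ Finset.Icc k N, p ^ ℓ * (1 - p) ^ (N - ℓ) * (N.choose ℓ : ℝ)
      ≤ ∑ ℓ ∈ Finset.range (N + 1), p ^ ℓ * (1 - p) ^ (N - ℓ) * (N.choose ℓ : ℝ) := by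
        refine Finset.sum_le_sum_of_subset_of_nonneg (fun ℓ => ?_) fun ℓ _ _ => by positivity
        simp only [Finset.mem_Icc, Finset.mem_range]
        omega
    _ = 1 := by rw [← add_pow, add_sub_cancel, one_pow]

section BinomialTail

variable {p x C : ℝ} {k N m : ℕ} {g : ℕ → ℝ}

lemma sum_choose_mul_one_sub_pow_nonneg (hp0 : 0 ≤ p) (hp1 : p ≤ 1) (hC : 0 ≤ C)
    (hg : ∀ ℓ ∈ Finset.Icc k N, g ℓ ≤ 1) :
    0 ≤ ∑ ℓ ∈ Finset.Icc k N, C * (N.choose ℓ : ℝ) * p ^ ℓ * (1 - p) ^ (N - ℓ) * (1 - g ℓ) ^ m :=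
  have hq : 0 ≤ 1 - p := sub_nonneg.2 hp1
  Finset.sum_nonneg fun ℓ hℓ =>
    have : 0 ≤ 1 - g ℓ := sub_nonneg.2 (hg ℓ hℓ)
    by positivity

lemma sum_choose_mul_one_sub_pow_le (hp0 : 0 ≤ p) (hp1 : p ≤ 1) (hC : 0 ≤ C) (hx : x ≤ 1)
    (hg : ∀ ℓ ∈ Finset.Icc k N, x ≤ g ℓ ∧ g ℓ ≤ 1) :
    ∑ ℓ ∈ Finset.Icc k N, C * (N.choose ℓ : ℝ) * p ^ ℓ * (1 - p) ^ (N - ℓ) * (1 - g ℓ) ^ m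
      ≤ C * (1 - x) ^ m := by
  have hq : 0 ≤ 1 - p := sub_nonneg.2 hp1
  have hCx : 0 ≤ C * (1 - x) ^ m := mul_nonneg hC (pow_nonneg (sub_nonneg.2 hx) _)
  calc ∑ ℓ ∈ Finset.Icc k N, C * (N.choose ℓ : ℝ) * p ^ ℓ * (1 - p) ^ (N - ℓ) * (1 - g ℓ) ^ m
      ≤ ∑ ℓ ∈ Finset.Icc k N, C * (1 - x) ^ m * (p ^ ℓ * (1 - p) ^ (N - ℓ) * (N.choose ℓ : ℝ)) := by
        refine Finset.sum_le_sum fun ℓ hℓ => ?_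
        obtain ⟨hxg, hg1⟩ := hg ℓ hℓ
        have hpow : (1 - g ℓ) ^ m ≤ (1 - x) ^ m :=
          pow_le_pow_left₀ (sub_nonneg.2 hg1) (by linarith) m
        calc _ ≤ C * (N.choose ℓ : ℝ) * p ^ ℓ * (1 - p) ^ (N - ℓ) * (1 - x) ^ m := by gcongr
          _ = _ := by ring
    _ = C * (1 - x) ^ m * ∑ ℓ ∈ Finset.Icc k N, p ^ ℓ * (1 - p) ^ (N - ℓ) * (N.choose ℓ : ℝ) :=
        (Finset.mul_sum ..).symm
    _ ≤ C * (1 - x) ^ m :=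
        mul_le_of_le_one_right hCx (sum_choose_mul_pow_mul_pow_le_one hp0 hp1 k N)

end BinomialTail

theorem upper_tail_sum_vanishes_general
    (Γ0 Γ1 : ℝ) (hΓ0 : 0 < Γ0) (hΓ01 : Γ0 < Γ1) (hΓ1 : Γ1 < 1)
    (μ1 : ℝ) (hμ1 : μ1 ∈ Set.Ioo (0:ℝ) 1)
    (ρ : ℝ) (L : ℕ → ℕ) (hL : Admissible ρ L)
    (ν' : ℝ) (hν' : ν' ∈ Set.Ioo (0:ℝ) 1)
    (hG : 1 + ρ * Real.log (Γ1 ^ ν' * Γ0 ^ (1 - ν')) > 0) :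
    Tendsto
      (fun n => ∑ ℓ ∈ Finset.Icc (⌊ν' * (L n : ℝ)⌋₊ + 1) (L n),
        (n : ℝ) * ((L n).choose ℓ : ℝ) * μ1 ^ ℓ * (1 - μ1) ^ (L n - ℓ) *
          (1 - Γ1 ^ ℓ * Γ0 ^ (L n - ℓ)) ^ (n - 1))
      atTop (nhds 0) := by
  set c := Γ1 ^ ν' * Γ0 ^ (1 - ν')
  have hΓ1pos : 0 < Γ1 := hΓ0.trans hΓ01
  have hc0 : 0 < c := by positivity
  have hc1 : c ≤ 1 := mul_le_one₀ (rpow_le_one hΓ1pos.le hΓ1.le hν'.1.le)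
    (rpow_nonneg hΓ0.le _) (rpow_le_one hΓ0.le (hΓ01.trans hΓ1).le (by linarith [hν'.2]))
  have hterm : ∀ N : ℕ, ∀ ℓ ∈ Finset.Icc (⌊ν' * (N : ℝ)⌋₊ + 1) N,
      c ^ N ≤ Γ1 ^ ℓ * Γ0 ^ (N - ℓ) ∧ Γ1 ^ ℓ * Γ0 ^ (N - ℓ) ≤ 1 := fun N ℓ hℓ =>
    ⟨rpow_mul_rpow_pow_le_pow_mul_pow hΓ0 hΓ01.le
      ((Nat.lt_floor_add_one _).le.trans (by exact_mod_cast (Finset.mem_Icc.1 hℓ).1))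
      (Finset.mem_Icc.1 hℓ).2,
     mul_le_one₀ (pow_le_one₀ hΓ1pos.le hΓ1.le) (by positivity)
      (pow_le_one₀ hΓ0.le (hΓ01.trans hΓ1).le)⟩
  refine squeeze_zero (fun n => sum_choose_mul_one_sub_pow_nonneg hμ1.1.le hμ1.2.le n.cast_nonneg
      fun ℓ hℓ => (hterm _ ℓ hℓ).2)
    (fun n => sum_choose_mul_one_sub_pow_le hμ1.1.le hμ1.2.le n.cast_nonneg
      (pow_le_one₀ hc0.le hc1) (hterm _))
    (tendsto_natCast_mul_one_sub_pow (β := (1 - ρ * log c) / 2) (by linarith)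
      (fun n => pow_le_one₀ hc0.le hc1) (hL.eventually_rpow_neg_le_pow hc0 (by linarith)))

theorem upper_tail_sum_vanishes
    (Γ0 Γ1 : ℝ) (hΓ0 : 0 < Γ0) (hΓ01 : Γ0 < Γ1) (hΓ1 : Γ1 < 1)
    (μ1 : ℝ) (hμ1 : μ1 ∈ Set.Ioo (0:ℝ) 1)
    (ρ : ℝ) (hρ : 0 < ρ) (L : ℕ → ℕ) (hL : Admissible ρ L)
    (ν' : ℝ) (hν' : ν' ∈ Set.Ioo (0:ℝ) 1)
    (hG : 1 + ρ * Real.log (Γ1 ^ ν' * Γ0 ^ (1 - ν')) > 0) :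
    Tendsto
      (fun n => ∑ ℓ ∈ Finset.Icc (⌊ν' * (L n : ℝ)⌋₊ + 1) (L n),
        (n : ℝ) * ((L n).choose ℓ : ℝ) * μ1 ^ ℓ * (1 - μ1) ^ (L n - ℓ) *
          (1 - Γ1 ^ ℓ * Γ0 ^ (L n - ℓ)) ^ (n - 1))
      atTop (nhds 0) :=
  upper_tail_sum_vanishes_general Γ0 Γ1 hΓ0 hΓ01 hΓ1 μ1 hμ1 ρ L hL ν' hν' hG
end

section
/- Stirling asymptotics for the binomial weight along ν-associated sequences: Let 0 < μ(1) < 1 with μ(0) = 1 − μ(1), let L : ℕ → ℕ satisfy L_n → ∞, let ν ∈ (0,1), and let ℓ : ℕ → ℕ satisfy ℓ_n ≤ L_n for all n and ν_n := ℓ_n/L_n → ν. Then, as n → ∞, n C(L_n, ℓ_n) μ(1)^{ℓ_n} μ(0)^{L_n−ℓ_n} is asymptotically equivalent to (n / √(2π ν_n (1−ν_n) L_n)) · G(ν_n, μ(1))^{L_n}, i.e., the ratio of the two sides tends to 1. -/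
open MeasureTheory Filter

lemma stirl_pos (k : ℕ) (hk : 0 < k) : 0 < Stirling.stirlingSeq k := by
  unfold Stirling.stirlingSeq
  have : (0:ℝ) < (k:ℝ) := by exact_mod_cast hk
  positivity

lemma fact_eq (k : ℕ) (hk : 0 < k) :
    (k.factorial : ℝ) = Stirling.stirlingSeq k * (Real.sqrt (2 * k) * ((k:ℝ) / Real.exp 1) ^ k) := by
  have hk' : (0:ℝ) < (k:ℝ) := by exact_mod_cast hk
  have hd : Real.sqrt (2 * k) * ((k:ℝ) / Real.exp 1) ^ k ≠ 0 := by positivity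
  rw [Stirling.stirlingSeq, div_mul_cancel₀ _ hd]

set_option maxHeartbeats 1000000 in
lemma key (μ1 : ℝ) (h0 : 0 < μ1) (h1 : μ1 < 1) (a b c n : ℕ)
    (ha : 0 < a) (hb : 0 < b) (hc : c = a + b) (hn : 0 < n) :
    ((n : ℝ) * (c.choose a : ℝ) * μ1 ^ a * (1 - μ1) ^ b) /
      ((n : ℝ) / Real.sqrt (2 * Real.pi * ((a:ℝ)/(c:ℝ)) * (1 - (a:ℝ)/(c:ℝ)) * (c:ℝ)) *
        Gfun ((a:ℝ)/(c:ℝ)) μ1 ^ c)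
    = Real.sqrt Real.pi * Stirling.stirlingSeq c /
        (Stirling.stirlingSeq a * Stirling.stirlingSeq b) := by
  have hA : (0:ℝ) < a := by exact_mod_cast ha
  have hB : (0:ℝ) < b := by exact_mod_cast hb
  have hC : (0:ℝ) < c := by rw [hc]; push_cast; linarith
  have hCab : (c:ℝ) = (a:ℝ) + (b:ℝ) := by rw [hc]; push_cast; ring
  set ν : ℝ := (a:ℝ)/(c:ℝ) with hνdef
  have hν0 : 0 < ν := by positivity
  have hν1 : ν < 1 := by
    rw [hνdef, div_lt_one hC, hCab]; linarith
  have h1ν : 1 - ν = (b:ℝ)/(c:ℝ) := by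
    rw [hνdef]; field_simp; linarith [hCab]
  have hνC : ν * (c:ℝ) = (a:ℝ) := by rw [hνdef]; field_simp
  have h1νC : (1 - ν) * (c:ℝ) = (b:ℝ) := by rw [h1ν]; field_simp
  set E := Real.exp 1 with hE
  have hEpos : 0 < E := Real.exp_pos 1
  -- G power formula
  have hx : (0:ℝ) < μ1 / ν := by positivity
  have hy : (0:ℝ) < (1 - μ1) / (1 - ν) := by
    apply div_pos <;> linarith
  have hG : Gfun ν μ1 ^ c = (μ1/ν) ^ a * ((1-μ1)/(1-ν)) ^ b := by
    unfold Gfun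
    rw [mul_pow]
    congr 1
    · rw [← Real.rpow_natCast ((μ1/ν) ^ ν) c, ← Real.rpow_mul hx.le, hνC,
        Real.rpow_natCast]
    · rw [← Real.rpow_natCast (((1-μ1)/(1-ν)) ^ (1-ν)) c, ← Real.rpow_mul hy.le, h1νC,
        Real.rpow_natCast]
  -- stirling notation
  set sA := Stirling.stirlingSeq a with hsA
  set sB := Stirling.stirlingSeq b with hsB
  set sC := Stirling.stirlingSeq c with hsC
  have hsApos := stirl_pos a ha
  have hsBpos := stirl_pos b hb
  have hsCpos := stirl_pos c (by omega)
  set P := Real.sqrt (2*(a:ℝ)) * ((a:ℝ)/E) ^ a with hP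
  set Q := Real.sqrt (2*(b:ℝ)) * ((b:ℝ)/E) ^ b with hQ
  set R := Real.sqrt (2*(c:ℝ)) * ((c:ℝ)/E) ^ c with hR
  have hPpos : 0 < P := by rw [hP]; positivity
  have hQpos : 0 < Q := by rw [hQ]; positivity
  have hCb : (c.choose a : ℝ) * (sA * P * (sB * Q)) = sC * R := by
    have h := Nat.choose_mul_factorial_mul_factorial (show a ≤ c by omega)
    have h' : ((c.choose a : ℕ) : ℝ) * (a.factorial : ℝ) * ((c - a).factorial : ℝ)
        = (c.factorial : ℝ) := by exact_mod_cast congrArg (Nat.cast (R := ℝ)) h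
    have hca : c - a = b := by omega
    rw [hca] at h'
    rw [fact_eq a ha, fact_eq b hb, fact_eq c (by omega)] at h'
    rw [← hP, ← hQ, ← hR, ← hsA, ← hsB, ← hsC] at h'
    linear_combination h'
  set S := Real.sqrt (2 * Real.pi * ν * (1 - ν) * (c:ℝ)) with hSdef
  have hSpos : 0 < S := by
    rw [hSdef]; apply Real.sqrt_pos.2
    have hπ := Real.pi_pos
    have h2 : 0 < 1 - ν := by linarith
    have : 0 < 2 * Real.pi * ν := by positivity
    exact mul_pos (mul_pos this h2) hC
  have hsq : Real.sqrt (2*(c:ℝ)) * S = Real.sqrt Real.pi *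
      (Real.sqrt (2*(a:ℝ)) * Real.sqrt (2*(b:ℝ))) := by
    have hCne : (c:ℝ) ≠ 0 := hC.ne'
    have harg : 2*(c:ℝ) * (2 * Real.pi * ν * (1 - ν) * (c:ℝ))
        = Real.pi * (2*(a:ℝ) * (2*(b:ℝ))) := by
      rw [hνdef, h1ν]
      field_simp
    rw [hSdef, ← Real.sqrt_mul (by positivity), harg,
      ← Real.sqrt_mul (by positivity : (0:ℝ) ≤ 2*(a:ℝ)),
      ← Real.sqrt_mul Real.pi_pos.le]
  have hpow1 : ((c:ℝ)/E) ^ c * (ν ^ a * (1-ν) ^ b) = ((a:ℝ)/E) ^ a * ((b:ℝ)/E) ^ b := by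
    rw [hc, pow_add]
    rw [← hc]
    have e1 : ((c:ℝ)/E) ^ a * ν ^ a = ((a:ℝ)/E) ^ a := by
      rw [← mul_pow]
      congr 1
      field_simp
      rw [mul_comm, hνC]
    have e2 : ((c:ℝ)/E) ^ b * (1-ν) ^ b = ((b:ℝ)/E) ^ b := by
      rw [← mul_pow]
      congr 1
      field_simp
      rw [mul_comm, h1νC]
    calc ((c:ℝ)/E) ^ a * ((c:ℝ)/E) ^ b * (ν ^ a * (1-ν) ^ b)
        = (((c:ℝ)/E) ^ a * ν ^ a) * (((c:ℝ)/E) ^ b * (1-ν) ^ b) := by ring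
      _ = _ := by rw [e1, e2]
  have hpow2 : μ1 ^ a = (μ1/ν) ^ a * ν ^ a := by
    rw [← mul_pow, div_mul_cancel₀ _ hν0.ne']
  have hpow3 : (1-μ1) ^ b = ((1-μ1)/(1-ν)) ^ b * (1-ν) ^ b := by
    rw [← mul_pow, div_mul_cancel₀ _ (by linarith : (1:ℝ) - ν ≠ 0)]
  have hPQ : R * S * (ν ^ a * (1-ν) ^ b) = Real.sqrt Real.pi * (P * Q) := by
    calc R * S * (ν ^ a * (1-ν) ^ b)
        = (Real.sqrt (2*(c:ℝ)) * S) * (((c:ℝ)/E) ^ c * (ν ^ a * (1-ν) ^ b)) := by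
          rw [hR]; ring
      _ = (Real.sqrt Real.pi * (Real.sqrt (2*(a:ℝ)) * Real.sqrt (2*(b:ℝ)))) *
            (((a:ℝ)/E) ^ a * ((b:ℝ)/E) ^ b) := by rw [hsq, hpow1]
      _ = Real.sqrt Real.pi * (P * Q) := by rw [hP, hQ]; ring
  -- main
  rw [hG]
  have hn' : (0:ℝ) < n := by exact_mod_cast hn
  have hD : (n:ℝ) / S * ((μ1/ν) ^ a * ((1-μ1)/(1-ν)) ^ b) ≠ 0 := by positivity
  rw [div_eq_div_iff hD (by positivity)]
  have hdivS : (n:ℝ)/S*S = (n:ℝ) := div_mul_cancel₀ _ hSpos.ne'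
  have goal2 : (n:ℝ) * (c.choose a : ℝ) * μ1 ^ a * (1 - μ1) ^ b * (sA * sB) * (S * (P * Q) * S)
      = Real.sqrt Real.pi * sC * ((n:ℝ) / S * ((μ1/ν) ^ a * ((1-μ1)/(1-ν)) ^ b)) * (S * (P * Q) * S) := by
    calc (n:ℝ) * (c.choose a : ℝ) * μ1 ^ a * (1 - μ1) ^ b * (sA * sB) * (S * (P * Q) * S)
        = ((n:ℝ) * μ1 ^ a * (1 - μ1) ^ b * S * S) * ((c.choose a : ℝ) * (sA * P * (sB * Q))) := by
          ring
      _ = ((n:ℝ) * μ1 ^ a * (1 - μ1) ^ b * S * S) * (sC * R) := by rw [hCb]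
      _ = ((n:ℝ) * ((μ1/ν) ^ a * ν ^ a) * (((1-μ1)/(1-ν)) ^ b * (1-ν) ^ b) * S * S) * (sC * R) := by
          rw [← hpow2, ← hpow3]
      _ = (n:ℝ) * sC * S * ((μ1/ν) ^ a * ((1-μ1)/(1-ν)) ^ b) * (R * S * (ν ^ a * (1-ν) ^ b)) := by
          ring
      _ = (n:ℝ) * sC * S * ((μ1/ν) ^ a * ((1-μ1)/(1-ν)) ^ b) * (Real.sqrt Real.pi * (P * Q)) := by
          rw [hPQ]
      _ = Real.sqrt Real.pi * sC * ((n:ℝ) / S * ((μ1/ν) ^ a * ((1-μ1)/(1-ν)) ^ b)) * (S * (P * Q) * S) := by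
          conv_lhs => rw [← hdivS]
          ring
  have hSPQ : S * (P * Q) * S ≠ 0 := by positivity
  exact mul_right_cancel₀ hSPQ goal2

theorem stirling_asymptotics_binomial_weight
    (μ1 : ℝ) (hμ1 : μ1 ∈ Set.Ioo (0:ℝ) 1)
    (L ℓ : ℕ → ℕ) (hLinf : Tendsto L atTop atTop)
    (ν : ℝ) (hν : ν ∈ Set.Ioo (0:ℝ) 1)
    (hle : ∀ n, ℓ n ≤ L n)
    (hνlim : Tendsto (fun n => (ℓ n : ℝ) / (L n : ℝ)) atTop (nhds ν)) :
    Tendsto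
      (fun n : ℕ =>
        ((n : ℝ) * ((L n).choose (ℓ n) : ℝ) * μ1 ^ ℓ n * (1 - μ1) ^ (L n - ℓ n)) /
          ((n : ℝ) / Real.sqrt (2 * Real.pi * ((ℓ n : ℝ) / (L n : ℝ)) *
              (1 - (ℓ n : ℝ) / (L n : ℝ)) * (L n : ℝ)) *
            Gfun ((ℓ n : ℝ) / (L n : ℝ)) μ1 ^ L n))
      atTop (nhds 1) := by
  have h0 := hμ1.1
  have h1 := hμ1.2
  have hLR : Tendsto (fun n => (L n : ℝ)) atTop atTop :=
    tendsto_natCast_atTop_atTop.comp hLinf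
  have hLpos : ∀ᶠ n in atTop, 0 < L n := hLinf.eventually_gt_atTop 0
  have hltop : Tendsto ℓ atTop atTop := by
    rw [← tendsto_natCast_atTop_iff (R := ℝ)]
    apply Tendsto.congr' _ (hνlim.pos_mul_atTop hν.1 hLR)
    filter_upwards [hLpos] with n hn
    have : (L n : ℝ) ≠ 0 := by positivity
    field_simp
  have hmtop : Tendsto (fun n => L n - ℓ n) atTop atTop := by
    rw [← tendsto_natCast_atTop_iff (R := ℝ)]
    have h1' : Tendsto (fun n => (1 - (ℓ n : ℝ)/(L n : ℝ))) atTop (nhds (1 - ν)) :=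
      tendsto_const_nhds.sub hνlim
    apply Tendsto.congr' _ (h1'.pos_mul_atTop (by linarith [hν.2]) hLR)
    filter_upwards [hLpos] with n hn
    have hz : (L n : ℝ) ≠ 0 := by positivity
    rw [Nat.cast_sub (hle n)]
    field_simp
  have hsπ : Real.sqrt Real.pi ≠ 0 := by
    have := Real.pi_pos
    positivity
  have htends : Tendsto
      (fun n => Real.sqrt Real.pi * Stirling.stirlingSeq (L n) /
        (Stirling.stirlingSeq (ℓ n) * Stirling.stirlingSeq (L n - ℓ n)))
      atTop (nhds (Real.sqrt Real.pi * Real.sqrt Real.pi /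
        (Real.sqrt Real.pi * Real.sqrt Real.pi))) := by
    exact Tendsto.div
      (tendsto_const_nhds.mul (Stirling.tendsto_stirlingSeq_sqrt_pi.comp hLinf))
      ((Stirling.tendsto_stirlingSeq_sqrt_pi.comp hltop).mul
        (Stirling.tendsto_stirlingSeq_sqrt_pi.comp hmtop))
      (by positivity)
  rw [show Real.sqrt Real.pi * Real.sqrt Real.pi /
      (Real.sqrt Real.pi * Real.sqrt Real.pi) = 1 by field_simp] at htends
  apply Tendsto.congr' _ htends
  filter_upwards [hltop.eventually_ge_atTop 1, hmtop.eventually_ge_atTop 1,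
    eventually_ge_atTop 1] with n hn1 hn2 hn3
  exact (key μ1 h0 h1 (ℓ n) (L n - ℓ n) (L n) n hn1 hn2
    (by have := hle n; omega) hn3).symm
end
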